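/- If (X,d,μ) is α-Ahlfors regular with γ r^α ≤ μ(B_d(x,r)) ≤ Γ r^α, then γ^k r^{kα} ≤ μ^k(E(x,r)) ≤ (2κ)^{αk} Γ^k r^{kα} for every x ∈ X and r > 0. -/

import Mathlib

open MeasureTheory

/-- The hypermetric of order `k+1` on `X` induced by the quasi-metric `d`. -/
noncomputable def rho {X : Type*} [Nonempty X] (d : X → X → ℝ) {k : ℕ}
    (x : X) (y : Fin k → X) : ℝ :=
  ⨅ u : X, ⨆ i, d ((Fin.cons x y : Fin (k + 1) → X) i) u

/-- The section at `x` of the `ρ`-tube of width `r` about the diagonal of `X^{k+1}`. -/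
def sectionE {X : Type*} [Nonempty X] (d : X → X → ℝ) (k : ℕ) (x : X) (r : ℝ) :
    Set (Fin k → X) :=
  {y : Fin k → X | rho d x y < r}

/-!
`ρ(x, y₁, …, y_k) < r` says exactly that all of `x, y₁, …, y_k` lie within `r` of a common
centre `u`. Taking `u = x` shows that the product of the balls `B(x, r)` lies in `E(x, r)`;
conversely the quasi-triangle inequality through `u` puts every `y_i` in `B(x, 2κr)`. Both
product sets have measure `μ(ball)^k`, which Ahlfors regularity bounds.
-/

open Set

section Hypermetric

variable {X : Type*} [Nonempty X] {d : X → X → ℝ} {k : ℕ} {x : X} {y : Fin k → X} {r : ℝ}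

lemma exists_center_of_rho_lt (h : rho d x y < r) :
    ∃ u, d x u < r ∧ ∀ i, d (y i) u < r := by
  obtain ⟨u, hu⟩ := exists_lt_of_ciInf_lt h
  have hlt : ∀ i, d ((Fin.cons x y : Fin (k + 1) → X) i) u < r := fun i =>
    (le_ciSup (Finite.bddAbove_range _) i).trans_lt hu
  exact ⟨u, by simpa using hlt 0, fun i => by simpa using hlt i.succ⟩

lemma rho_lt_of_center (hnn : ∀ x y, 0 ≤ d x y) {u : X} (hxu : d x u < r)
    (hyu : ∀ i, d (y i) u < r) : rho d x y < r := by
  obtain ⟨i, hi⟩ := exists_eq_ciSup_of_finite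
    (f := fun i => d ((Fin.cons x y : Fin (k + 1) → X) i) u)
  have hbdd : BddBelow (range fun v => ⨆ i, d ((Fin.cons x y : Fin (k + 1) → X) i) v) := by
    refine ⟨0, ?_⟩
    rintro _ ⟨v, rfl⟩
    exact (hnn _ _).trans
      (le_ciSup (Finite.bddAbove_range fun i => d ((Fin.cons x y : Fin (k + 1) → X) i) v) 0)
  refine (ciInf_le hbdd u).trans_lt (hi ▸ ?_)
  cases i using Fin.cases with
  | zero => simpa using hxu
  | succ j => simpa using hyu j

lemma pi_ball_subset_sectionE (hnn : ∀ x y, 0 ≤ d x y) (hsym : ∀ x y, d x y = d y x)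
    (hzero : ∀ x y, d x y = 0 ↔ x = y) (hr : 0 < r) :
    univ.pi (fun _ : Fin k => {y | d x y < r}) ⊆ sectionE d k x r := fun y hy =>
  rho_lt_of_center hnn (by rwa [(hzero x x).2 rfl]) fun i => by
    rw [hsym]; exact hy i (mem_univ i)

lemma sectionE_subset_pi_ball {κ : ℝ} (hsym : ∀ x y, d x y = d y x)
    (htri : ∀ x y z, d x z ≤ κ * (d x y + d y z)) (hκ : 0 < κ) :
    sectionE d k x r ⊆ univ.pi (fun _ : Fin k => {y | d x y < 2 * κ * r}) := by
  intro y hy i _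
  obtain ⟨u, hxu, hyu⟩ := exists_center_of_rho_lt hy
  calc d x (y i) ≤ κ * (d x u + d u (y i)) := htri x u (y i)
    _ < κ * (r + r) := by
        gcongr
        linarith [hsym u (y i), hyu i]
    _ = 2 * κ * r := by ring

end Hypermetric

section Measure

variable {X : Type*} [MeasurableSpace X] {μ : Measure X}

lemma sigmaFinite_of_measure_ball_ne_top (d : X → X → ℝ) (x : X)
    (h : ∀ r, 0 < r → μ {y | d x y < r} ≠ ⊤) : SigmaFinite μ := by
  refine ⟨⟨⟨fun n : ℕ => {y | d x y < n + 1}, fun _ => trivial,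
    fun n => (h _ n.cast_add_one_pos).lt_top, ?_⟩⟩⟩
  refine iUnion_eq_univ_iff.2 fun y => ?_
  obtain ⟨n, hn⟩ := exists_nat_gt (d x y)
  exact ⟨n, show d x y < n + 1 by linarith⟩

lemma measure_pi_univ_pi_const {ι : Type*} [Fintype ι] [SigmaFinite μ] (s : Set X) :
    Measure.pi (fun _ : ι => μ) (univ.pi fun _ => s) = μ s ^ Fintype.card ι := by
  rw [Measure.pi_pi, Finset.prod_const, Finset.card_univ]

end Measure

lemma mul_rpow_pow (c : ℝ) {r : ℝ} (hr : 0 ≤ r) (α : ℝ) (k : ℕ) :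
    (c * r ^ α) ^ k = c ^ k * r ^ ((k : ℝ) * α) := by
  rw [mul_pow, mul_comm (k : ℝ), Real.rpow_mul hr, Real.rpow_natCast]

theorem stmt6_general {X : Type*} [Nonempty X] [MeasurableSpace X] (d : X → X → ℝ)
    (κ α γ Γ : ℝ) (hκ : 1 ≤ κ) (hγ : 0 < γ) (hγΓ : γ ≤ Γ)
    (hnn : ∀ x y, 0 ≤ d x y) (hsym : ∀ x y, d x y = d y x)
    (hzero : ∀ x y, d x y = 0 ↔ x = y)
    (htri : ∀ x y z, d x z ≤ κ * (d x y + d y z))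
    (μ : Measure X)
    (hAhl : ∀ (x : X) (r : ℝ), 0 < r →
      ENNReal.ofReal (γ * r ^ α) ≤ μ {y | d x y < r} ∧
      μ {y | d x y < r} ≤ ENNReal.ofReal (Γ * r ^ α))
    (k : ℕ) (x : X) (r : ℝ) (hr : 0 < r) :
    ENNReal.ofReal (γ ^ k * r ^ ((k : ℝ) * α)) ≤
      (Measure.pi fun _ : Fin k => μ) (sectionE d k x r) ∧
    (Measure.pi fun _ : Fin k => μ) (sectionE d k x r) ≤
      ENNReal.ofReal ((2 * κ) ^ (α * k) * Γ ^ k * r ^ ((k : ℝ) * α)) := by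
  have hκ₀ : 0 < κ := one_pos.trans_le hκ
  have hΓ : 0 ≤ Γ := hγ.le.trans hγΓ
  have : SigmaFinite μ := sigmaFinite_of_measure_ball_ne_top d x fun r hr =>
    ne_top_of_le_ne_top ENNReal.ofReal_ne_top (hAhl x r hr).2
  have hpi (s : Set X) := measure_pi_univ_pi_const (ι := Fin k) (μ := μ) s
  rw [Fintype.card_fin] at hpi
  constructor
  · calc ENNReal.ofReal (γ ^ k * r ^ ((k : ℝ) * α)) = ENNReal.ofReal (γ * r ^ α) ^ k := by
          rw [← mul_rpow_pow γ hr.le, ENNReal.ofReal_pow (by positivity)]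
      _ ≤ μ {y | d x y < r} ^ k := by gcongr; exact (hAhl x r hr).1
      _ = _ := (hpi _).symm
      _ ≤ _ := measure_mono (pi_ball_subset_sectionE hnn hsym hzero hr)
  · have h2κr : 0 < 2 * κ * r := by positivity
    calc _ ≤ _ := measure_mono (sectionE_subset_pi_ball hsym htri hκ₀)
      _ = μ {y | d x y < 2 * κ * r} ^ k := hpi _
      _ ≤ ENNReal.ofReal (Γ * (2 * κ * r) ^ α) ^ k := by gcongr; exact (hAhl x _ h2κr).2
      _ = _ := by
        rw [← ENNReal.ofReal_pow (by positivity), Real.mul_rpow (by positivity) hr.le,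
          ← mul_assoc, mul_rpow_pow _ hr.le, mul_pow, ← Real.rpow_natCast ((2 * κ) ^ α),
          ← Real.rpow_mul (by positivity)]
        congr 1
        ring

/-- If `(X, d, μ)` is `α`-Ahlfors regular with `γ r^α ≤ μ(B_d(x,r)) ≤ Γ r^α`, then
`γ^k r^{kα} ≤ μ^k(E(x,r)) ≤ (2κ)^{αk} Γ^k r^{kα}` for every `x ∈ X` and `r > 0`. -/
theorem stmt6 {X : Type*} [Nonempty X] [MeasurableSpace X] (d : X → X → ℝ)
    (κ α γ Γ : ℝ) (hκ : 1 ≤ κ) (hα : 0 < α) (hγ : 0 < γ) (hγΓ : γ ≤ Γ)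
    (hnn : ∀ x y, 0 ≤ d x y) (hsym : ∀ x y, d x y = d y x)
    (hzero : ∀ x y, d x y = 0 ↔ x = y)
    (htri : ∀ x y z, d x z ≤ κ * (d x y + d y z))
    (μ : Measure X)
    (hAhl : ∀ (x : X) (r : ℝ), 0 < r →
      ENNReal.ofReal (γ * r ^ α) ≤ μ {y | d x y < r} ∧
      μ {y | d x y < r} ≤ ENNReal.ofReal (Γ * r ^ α))
    (k : ℕ) (x : X) (r : ℝ) (hr : 0 < r) :
    ENNReal.ofReal (γ ^ k * r ^ ((k : ℝ) * α)) ≤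
      (Measure.pi fun _ : Fin k => μ) (sectionE d k x r) ∧
    (Measure.pi fun _ : Fin k => μ) (sectionE d k x r) ≤
      ENNReal.ofReal ((2 * κ) ^ (α * k) * Γ ^ k * r ^ ((k : ℝ) * α)) :=
  stmt6_general d κ α γ Γ hκ hγ hγΓ hnn hsym hzero htri μ hAhl k x r hr
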